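/- For every nonnegative integer n, every positive integer α, and every fixed x ≠ 0 (q real, q → 1 from below), lim_{q→1⁻} ∂_q G_{n,q}^{(α)}(x) = n · G_{n-1}^{(α)}(x), where G_m^{(α)}(x) are the ordinary higher-order Genocchi polynomials defined by Σ_{m≥0} G_m^{(α)}(x) t^m/m! = (2t/(e^t+1))^α e^{xt}. -/

import Mathlib

open PowerSeries Finset Filter Topology

/-- The `q`-number `[n]_q = (1 - q^n)/(1 - q)` (real `q`). -/
noncomputable def qNumR (q : ℝ) (n : ℕ) : ℝ := (1 - q ^ n) / (1 - q)

/-- The `q`-factorial `[n]_q! = [n]_q [n-1]_q ⋯ [1]_q`, with `[0]_q! = 1` (real `q`). -/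
noncomputable def qFactR (q : ℝ) : ℕ → ℝ
  | 0 => 1
  | n + 1 => qNumR q (n + 1) * qFactR q n

/-- The Gaussian `q`-binomial coefficient `[n]_q! / ([k]_q! [n-k]_q!)` (real `q`). -/
noncomputable def qBinomR (q : ℝ) (n k : ℕ) : ℝ :=
  qFactR q n / (qFactR q k * qFactR q (n - k))

/-- `e_q(zx)` as a formal power series in `z`: `∑ x^l z^l / [l]_q!` (real `q`). -/
noncomputable def qExpGFR (q x : ℝ) : PowerSeries ℝ :=
  PowerSeries.mk fun l => x ^ l / qFactR q l

/-- The generating function `([2]_q z/(e_q(z)+1))^α e_q(zx)` of the higher-order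
`q`-Genocchi polynomials, as a formal power series in `z` (real `q`). -/
noncomputable def qGenocchiGFR (q : ℝ) (α : ℕ) (x : ℝ) : PowerSeries ℝ :=
  (PowerSeries.C (qNumR q 2) * PowerSeries.X * (qExpGFR q 1 + 1)⁻¹) ^ α * qExpGFR q x

/-- `e^{xt}` as a formal power series in `t` over `ℝ`. -/
noncomputable def expGFR (x : ℝ) : PowerSeries ℝ :=
  PowerSeries.mk fun n => x ^ n / n.factorial

/-- The generating function `(2t/(e^t+1))^α e^{xt}` of the ordinary higher-order
Genocchi polynomials, as a formal power series in `t`. -/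
noncomputable def genocchiGFR (α : ℕ) (x : ℝ) : PowerSeries ℝ :=
  (PowerSeries.C (2 : ℝ) * PowerSeries.X * (expGFR 1 + 1)⁻¹) ^ α * expGFR x

/-!
Rubin's operator is linear, so it commutes with taking coefficients of the generating function
and with multiplication by the prefactor `([2]_q z/(e_q(z)+1))^α`, which does not depend on `x`.
On monomials it gives `[j]_q x^(j-1)` (times `q^(-j)` for even `j`), so applied to `e_q(zx)` it
yields a power series converging coefficientwise to `z e^(zx)` as `q → 1⁻`. Coefficientwise
convergence is convergence in the product topology, in which multiplication and inversion of
series with nonzero constant term are continuous; hence `∂_q` of the generating function tends to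
`z (2z/(e^z+1))^α e^(zx)`, whose `n`-th coefficient is `G_(n-1)^(α)(x)/(n-1)!`.
-/

open scoped PowerSeries.WithPiTopology

lemma qNumR_eq_sum_range {q : ℝ} (hq : q ≠ 1) (k : ℕ) : qNumR q k = ∑ i ∈ range k, q ^ i := by
  rw [qNumR, eq_comm, eq_div_iff (sub_ne_zero.mpr hq.symm), ← neg_sub q 1, mul_neg,
    geom_sum_mul, neg_sub]

lemma qNumR_succ_pos {q : ℝ} (hq0 : 0 ≤ q) (hq1 : q ≠ 1) (k : ℕ) : 0 < qNumR q (k + 1) := by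
  rw [qNumR_eq_sum_range hq1, sum_range_succ']
  positivity

lemma qFactR_pos {q : ℝ} (hq0 : 0 ≤ q) (hq1 : q ≠ 1) : ∀ n, 0 < qFactR q n
  | 0 => one_pos
  | n + 1 => mul_pos (qNumR_succ_pos hq0 hq1 n) (qFactR_pos hq0 hq1 n)

lemma tendsto_qNumR (k : ℕ) : Tendsto (fun q => qNumR q k) (𝓝[<] 1) (𝓝 (k : ℝ)) := by
  have hsum : Tendsto (fun q : ℝ => ∑ i ∈ range k, q ^ i) (𝓝[<] 1) (𝓝 (k : ℝ)) := by
    simpa using ((continuous_finsetSum (range k) fun i _ => continuous_pow i).continuousAt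
      (x := (1 : ℝ))).continuousWithinAt.tendsto (s := Set.Iio 1)
  refine hsum.congr' ?_
  filter_upwards [self_mem_nhdsWithin] with q hq
  exact (qNumR_eq_sum_range (ne_of_lt hq) k).symm

lemma tendsto_qFactR (n : ℕ) :
    Tendsto (fun q => qFactR q n) (𝓝[<] 1) (𝓝 (n.factorial : ℝ)) := by
  induction n with
  | zero => simp [qFactR]
  | succ n ih =>
    simpa [qFactR, Nat.factorial_succ] using (tendsto_qNumR (n + 1)).mul ih

namespace PowerSeries.WithPiTopology

variable {k ι : Type*} [Field k] [TopologicalSpace k] [IsTopologicalDivisionRing k]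

theorem tendsto_inv {l : Filter ι} {F : ι → k⟦X⟧} {f : k⟦X⟧} (hF : Tendsto F l (𝓝 f))
    (hf : constantCoeff f ≠ 0) : Tendsto (fun i => (F i)⁻¹) l (𝓝 f⁻¹) := by
  rw [tendsto_iff_coeff_tendsto] at hF ⊢
  have hc : Tendsto (fun i => (constantCoeff (F i))⁻¹) l (𝓝 (constantCoeff f)⁻¹) := by
    simpa only [coeff_zero_eq_constantCoeff] using
      (hF 0).inv₀ (by rwa [coeff_zero_eq_constantCoeff_apply])
  intro m
  induction m using Nat.strong_induction_on with
  | _ m ih =>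
    simp only [coeff_inv m]
    split_ifs
    · exact hc
    refine hc.neg.mul (tendsto_finsetSum _ fun p _ => ?_)
    split_ifs with hp
    · exact (hF p.1).mul (ih p.2 hp)
    · exact tendsto_const_nhds

end PowerSeries.WithPiTopology

open PowerSeries.WithPiTopology

lemma tendsto_qExpGFR (x : ℝ) : Tendsto (fun q => qExpGFR q x) (𝓝[<] 1) (𝓝 (expGFR x)) := by
  rw [tendsto_iff_coeff_tendsto]
  intro m
  simp only [qExpGFR, expGFR, coeff_mk]
  exact tendsto_const_nhds.div (tendsto_qFactR m) (by positivity)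

lemma tendsto_qGenocchi_prefactor (α : ℕ) :
    Tendsto (fun q => (C (qNumR q 2) * X * (qExpGFR q 1 + 1)⁻¹) ^ α) (𝓝[<] 1)
      (𝓝 ((C (2 : ℝ) * X * (expGFR 1 + 1)⁻¹) ^ α)) := by
  have hC : Tendsto (fun q => C (qNumR q 2)) (𝓝[<] 1) (𝓝 (C (2 : ℝ))) := by
    have h2 := tendsto_qNumR 2
    rw [Nat.cast_ofNat] at h2
    exact (continuous_C.tendsto _).comp h2
  have hunit : constantCoeff (expGFR 1 + 1) ≠ 0 := by
    simp [expGFR, ← coeff_zero_eq_constantCoeff]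
  exact ((hC.mul tendsto_const_nhds).mul
    (tendsto_inv ((tendsto_qExpGFR 1).add tendsto_const_nhds) hunit)).pow α

-- Vector values let the operator act coefficientwise on power series in `z`.
noncomputable def rubinDiff {M : Type*} [AddCommGroup M] [Module ℝ M]
    (q : ℝ) (f : ℝ → M) (x : ℝ) : M :=
  (2 * (1 - q) * x)⁻¹ •
    (f (q⁻¹ * x) + f (-(q⁻¹ * x)) - f (q * x) + f (-(q * x)) - (2 : ℝ) • f (-x))

section rubinDiff

variable {M N : Type*} [AddCommGroup M] [Module ℝ M] [AddCommGroup N] [Module ℝ N]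

lemma rubinDiff_real (q : ℝ) (f : ℝ → ℝ) (x : ℝ) :
    rubinDiff q f x = (f (q⁻¹ * x) + f (-(q⁻¹ * x)) - f (q * x) + f (-(q * x)) - 2 * f (-x)) /
      (2 * (1 - q) * x) := by
  rw [rubinDiff, smul_eq_mul, smul_eq_mul, inv_mul_eq_div]

lemma LinearMap.map_rubinDiff (L : M →ₗ[ℝ] N) (q : ℝ) (f : ℝ → M) (x : ℝ) :
    L (rubinDiff q f x) = rubinDiff q (fun y => L (f y)) x := by
  simp only [rubinDiff, map_smul, map_sub, map_add]

lemma rubinDiff_div_const (q : ℝ) (f : ℝ → ℝ) (c x : ℝ) :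
    rubinDiff q (fun y => f y / c) x = rubinDiff q f x / c := by
  simp only [rubinDiff_real]
  ring

lemma rubinDiff_pow_of_even {q : ℝ} (hq0 : q ≠ 0) (hq1 : q ≠ 1) (x : ℝ) {j : ℕ} (hj : Even j) :
    rubinDiff q (· ^ j) x = q⁻¹ ^ j * qNumR q j * x ^ j / x := by
  have h1q : (1 : ℝ) - q ≠ 0 := sub_ne_zero.mpr hq1.symm
  rw [rubinDiff_real, qNumR, hj.neg_pow, hj.neg_pow, hj.neg_pow, mul_pow, mul_pow, inv_pow]
  field_simp
  ring

lemma rubinDiff_pow_of_odd {q : ℝ} (hq1 : q ≠ 1) (x : ℝ) {j : ℕ} (hj : Odd j) :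
    rubinDiff q (· ^ j) x = qNumR q j * x ^ j / x := by
  have h1q : (1 : ℝ) - q ≠ 0 := sub_ne_zero.mpr hq1.symm
  rw [rubinDiff_real, qNumR, hj.neg_pow, hj.neg_pow, hj.neg_pow]
  field_simp
  ring

lemma tendsto_rubinDiff_pow (x : ℝ) (j : ℕ) :
    Tendsto (fun q => rubinDiff q (· ^ j) x) (𝓝[<] 1) (𝓝 (j * x ^ j / x)) := by
  have hq : ∀ᶠ q in 𝓝[<] (1 : ℝ), q ∈ Set.Ioo (0 : ℝ) 1 := Ioo_mem_nhdsLT zero_lt_one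
  rcases Nat.even_or_odd j with hj | hj
  · have hinv : Tendsto (fun q : ℝ => q⁻¹ ^ j) (𝓝[<] 1) (𝓝 1) := by
      have h := ((tendsto_inv₀ (one_ne_zero' ℝ)).pow j).mono_left
        (nhdsWithin_le_nhds (s := Set.Iio 1))
      rwa [inv_one, one_pow] at h
    have hlim := ((hinv.mul (tendsto_qNumR j)).mul_const (x ^ j)).div_const x
    rw [one_mul] at hlim
    refine hlim.congr' ?_
    filter_upwards [hq] with q hq
    exact (rubinDiff_pow_of_even hq.1.ne' hq.2.ne x hj).symm
  · refine (((tendsto_qNumR j).mul_const (x ^ j)).div_const x).congr' ?_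
    filter_upwards [hq] with q hq
    exact (rubinDiff_pow_of_odd hq.2.ne x hj).symm

end rubinDiff

lemma coeff_X_mul_expGFR {x : ℝ} (hx : x ≠ 0) (l : ℕ) :
    coeff l (X * expGFR x) = l * x ^ l / x / l.factorial := by
  cases l with
  | zero => simp
  | succ l =>
    rw [coeff_succ_X_mul, expGFR, coeff_mk, Nat.factorial_succ]
    push_cast
    field_simp
    ring

lemma tendsto_rubinDiff_qExpGFR {x : ℝ} (hx : x ≠ 0) :
    Tendsto (fun q => rubinDiff q (qExpGFR q) x) (𝓝[<] 1) (𝓝 (X * expGFR x)) := by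
  rw [tendsto_iff_coeff_tendsto]
  intro l
  have hcoeff (q : ℝ) :
      coeff l (rubinDiff q (qExpGFR q) x) = rubinDiff q (· ^ l) x / qFactR q l := by
    rw [LinearMap.map_rubinDiff, ← rubinDiff_div_const]
    simp only [qExpGFR, coeff_mk]
  simp only [hcoeff, coeff_X_mul_expGFR hx]
  exact (tendsto_rubinDiff_pow x l).div (tendsto_qFactR l) (by positivity)

lemma rubinDiff_qGenocchiGFR (q : ℝ) (α : ℕ) (x : ℝ) :
    rubinDiff q (qGenocchiGFR q α) x =
      (C (qNumR q 2) * X * (qExpGFR q 1 + 1)⁻¹) ^ α * rubinDiff q (qExpGFR q) x :=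
  ((LinearMap.mulLeft ℝ _).map_rubinDiff q (qExpGFR q) x).symm

lemma tendsto_rubinDiff_qGenocchiGFR (α : ℕ) {x : ℝ} (hx : x ≠ 0) :
    Tendsto (fun q => rubinDiff q (qGenocchiGFR q α) x) (𝓝[<] 1) (𝓝 (X * genocchiGFR α x)) := by
  simp only [rubinDiff_qGenocchiGFR]
  convert (tendsto_qGenocchi_prefactor α).mul (tendsto_rubinDiff_qExpGFR hx) using 2
  rw [genocchiGFR]
  ring

theorem rubin_qDeriv_qGenocchi_tendsto_general (α : ℕ)
    (G : ℝ → ℕ → ℝ → ℝ)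
    (hG : ∀ q ∈ Set.Ioo (0 : ℝ) 1, ∀ x : ℝ,
      PowerSeries.mk (fun n => G q n x / qFactR q n) = qGenocchiGFR q α x)
    (H : ℕ → ℝ → ℝ)
    (hH : ∀ x : ℝ,
      PowerSeries.mk (fun m => H m x / m.factorial) = genocchiGFR α x)
    (n : ℕ) (x : ℝ) (hx : x ≠ 0) :
    Filter.Tendsto
      (fun q : ℝ =>
        (G q n (q⁻¹ * x) + G q n (-(q⁻¹ * x)) - G q n (q * x) + G q n (-(q * x)) -
            2 * G q n (-x)) / (2 * (1 - q) * x))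
      (𝓝[<] (1 : ℝ)) (𝓝 ((n : ℝ) * H (n - 1) x)) := by
  have hGq : ∀ᶠ q in 𝓝[<] (1 : ℝ),
      qFactR q n * coeff n (rubinDiff q (qGenocchiGFR q α) x) = rubinDiff q (G q n) x := by
    filter_upwards [Ioo_mem_nhdsLT zero_lt_one] with q hq
    have hG' : G q n = fun y => qFactR q n * coeff n (qGenocchiGFR q α y) := by
      ext y
      rw [← hG q hq y, coeff_mk, mul_div_cancel₀ _ (qFactR_pos hq.1.le hq.2.ne n).ne']
    rw [hG', (coeff n).map_rubinDiff]
    exact (LinearMap.mulLeft ℝ (qFactR q n)).map_rubinDiff q _ x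
  have hvalue : (n.factorial : ℝ) * coeff n (X * genocchiGFR α x) = n * H (n - 1) x := by
    cases n with
    | zero => simp
    | succ m =>
      rw [coeff_succ_X_mul, ← hH x, coeff_mk, Nat.factorial_succ, Nat.add_sub_cancel]
      push_cast
      field_simp
  simp only [← rubinDiff_real, ← hvalue]
  exact ((tendsto_qFactR n).mul (((continuous_coeff ℝ n).tendsto _).comp
    (tendsto_rubinDiff_qGenocchiGFR α hx))).congr' hGq

/-- For fixed `x ≠ 0`, as `q → 1⁻` Rubin's `q`-differential operator applied to the
higher-order `q`-Genocchi polynomial tends to `n ⬝ G_{n-1}^{(α)}(x)`, where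
`G_m^{(α)}` are the ordinary higher-order Genocchi polynomials. -/
theorem rubin_qDeriv_qGenocchi_tendsto (α : ℕ) (hα : 0 < α)
    (G : ℝ → ℕ → ℝ → ℝ)
    (hG : ∀ q ∈ Set.Ioo (0 : ℝ) 1, ∀ x : ℝ,
      PowerSeries.mk (fun n => G q n x / qFactR q n) = qGenocchiGFR q α x)
    (H : ℕ → ℝ → ℝ)
    (hH : ∀ x : ℝ,
      PowerSeries.mk (fun m => H m x / m.factorial) = genocchiGFR α x)
    (n : ℕ) (x : ℝ) (hx : x ≠ 0) :
    Filter.Tendsto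
      (fun q : ℝ =>
        (G q n (q⁻¹ * x) + G q n (-(q⁻¹ * x)) - G q n (q * x) + G q n (-(q * x)) -
            2 * G q n (-x)) / (2 * (1 - q) * x))
      (𝓝[<] (1 : ℝ)) (𝓝 ((n : ℝ) * H (n - 1) x)) :=
  rubin_qDeriv_qGenocchi_tendsto_general α G hG H hH n x hx
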